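/- arXiv:1509.02716 — 4 statements merged into one kernel-verified Lean document; each statement's English description precedes it below -/
import Mathlib

section
/- Let h be the 5-dimensional real Lie algebra with nonzero brackets [X_1,X_2] = X_2, [X_1,X_3] = -X_3, [X_1,X_4] = -2X_4, [X_2,X_3] = -X_5, and let θ^1 be the first dual basis 1-form. For λ ∉ {-3, -2, -1, 1}, the second deformed cohomology H^2_{λθ^1}(h) vanishes. -/
/-!
A closed alternating 2-form `B` is determined by the numbers `B(X_i, X_j)`, `i < j`. The form
`θ^1` vanishes on `X_2, …, X_5`, and `ad X_1` acts there diagonally with eigenvalues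
`c = 1, -1, -2, 0`; so for a 1-form `φ`, `d_{λθ^1} φ (X_1, X_j) = (λ - c_j) φ(X_j)`, while
`d_{λθ^1} φ (X_i, X_j) = -φ[X_i, X_j]` for `i, j ≥ 2`. The cocycle identity on six triples gives
`B(X_1, X_5) = λ B(X_2, X_3)` and `(λ + 1) B(X_2, X_4) = (λ - 1) B(X_2, X_5) = (λ + 3) B(X_3, X_4)
= (λ + 1) B(X_3, X_5) = B(X_4, X_5) = 0`. For `λ ∉ {-3, -2, -1, 1}` this makes `B = d_{λθ^1} φ`
with `φ(X_1) = 0`, `φ(X_j) = B(X_1, X_j) / (λ - c_j)` for `j = 2, 3, 4` and `φ(X_5) = B(X_2, X_3)`.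
-/

open scoped BigOperators

/-- The space of real-valued `k`-cochains on `L` (as bare functions). -/
abbrev Cochain (L : Type*) (k : ℕ) := (Fin k → L) → ℝ

variable {L : Type*} [LieRing L] [LieAlgebra ℝ L]

/-- A cochain is an alternating multilinear map, i.e. an element of `Hom(Λ^k g, ℝ)`. -/
def IsAltMap {k : ℕ} (θ : Cochain L k) : Prop :=
  ∃ f : AlternatingMap ℝ L ℝ (Fin k), ⇑f = θ

/-- The Chevalley–Eilenberg differential with trivial coefficients:
`(dθ)(X_0,…,X_k) = ∑_{p<q} (-1)^{p+q} θ([X_p,X_q],X_0,…,X̂_p,…,X̂_q,…,X_k)`. -/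
def CEd : {k : ℕ} → Cochain L k → Cochain L (k + 1)
  | 0, _ => fun _ => 0
  | (k + 1), θ => fun X =>
      ∑ p : Fin (k + 2), ∑ q : Fin (k + 2),
        if h : (p : ℕ) < (q : ℕ) then
          ((-1 : ℝ) ^ ((p : ℕ) + (q : ℕ))) *
            θ (Fin.cons ⁅X p, X q⁆
                (Fin.removeNth ⟨(p : ℕ), lt_of_lt_of_le h (Nat.lt_succ_iff.mp q.isLt)⟩
                  (Fin.removeNth q X)))
        else 0

/-- The wedge product `ω ∧ θ` of a 1-cochain with a `k`-cochain. -/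
def oneWedge {k : ℕ} (ω : L → ℝ) (θ : Cochain L k) : Cochain L (k + 1) :=
  fun X => ∑ i : Fin (k + 1), ((-1 : ℝ) ^ (i : ℕ)) * ω (X i) * θ (Fin.removeNth i X)

/-- The deformed differential `d_{λω} θ = dθ + λ ω ∧ θ`. -/
def dDef {k : ℕ} (lam : ℝ) (ω : L → ℝ) (θ : Cochain L k) : Cochain L (k + 1) :=
  CEd θ + lam • oneWedge ω θ

/-- The submodule of alternating multilinear `k`-cochains, i.e. `C^k(g,ℝ) = Hom(Λ^k g, ℝ)`. -/
def AltSub (L : Type*) [LieRing L] [LieAlgebra ℝ L] (k : ℕ) : Submodule ℝ (Cochain L k) where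
  carrier := {θ | IsAltMap θ}
  add_mem' := by rintro θ₁ θ₂ ⟨f, rfl⟩ ⟨g, rfl⟩; exact ⟨f + g, rfl⟩
  zero_mem' := ⟨0, rfl⟩
  smul_mem' := by rintro c θ ⟨f, rfl⟩; exact ⟨c • f, rfl⟩

/-- The Chevalley–Eilenberg differential as a linear map. -/
def CEdL (L : Type*) [LieRing L] [LieAlgebra ℝ L] (k : ℕ) :
    Cochain L k →ₗ[ℝ] Cochain L (k + 1) where
  toFun := CEd
  map_add' θ₁ θ₂ := by
    cases k with
    | zero => funext X; exact (zero_add (0:ℝ)).symm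
    | succ k =>
      funext X
      show _ = CEd θ₁ X + CEd θ₂ X
      simp only [CEd, Pi.add_apply]
      rw [← Finset.sum_add_distrib]
      refine Finset.sum_congr rfl fun p _ => ?_
      rw [← Finset.sum_add_distrib]
      refine Finset.sum_congr rfl fun q _ => ?_
      split_ifs <;> simp [mul_add]
  map_smul' c θ := by
    cases k with
    | zero => funext X; exact (smul_zero c).symm
    | succ k =>
      funext X
      show _ = c * CEd θ X
      simp only [CEd, Pi.smul_apply, smul_eq_mul]
      rw [Finset.mul_sum]
      refine Finset.sum_congr rfl fun p _ => ?_
      rw [Finset.mul_sum]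
      refine Finset.sum_congr rfl fun q _ => ?_
      split_ifs with h
      · ring
      · exact (mul_zero c).symm

/-- The operator `θ ↦ ω ∧ θ` as a linear map. -/
def oneWedgeL (L : Type*) [LieRing L] [LieAlgebra ℝ L] (ω : L → ℝ) (k : ℕ) :
    Cochain L k →ₗ[ℝ] Cochain L (k + 1) where
  toFun := oneWedge ω
  map_add' θ₁ θ₂ := by
    funext X
    simp [oneWedge, mul_add, Finset.sum_add_distrib]
  map_smul' c θ := by
    funext X
    simp only [oneWedge, Pi.smul_apply, smul_eq_mul, RingHom.id_apply]
    rw [Finset.mul_sum]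
    exact Finset.sum_congr rfl fun i _ => by ring

/-- The deformed differential `d_{λω}` as a linear map. -/
noncomputable def dDefL (L : Type*) [LieRing L] [LieAlgebra ℝ L]
    (lam : ℝ) (ω : L → ℝ) (k : ℕ) : Cochain L k →ₗ[ℝ] Cochain L (k + 1) :=
  CEdL L k + lam • oneWedgeL L ω k

/-- Deformed `k`-cocycles: alternating cochains with `d_{λω} θ = 0`. -/
noncomputable def Zdef (L : Type*) [LieRing L] [LieAlgebra ℝ L]
    (lam : ℝ) (ω : L → ℝ) (k : ℕ) : Submodule ℝ (Cochain L k) :=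
  AltSub L k ⊓ LinearMap.ker (dDefL L lam ω k)

/-- Deformed `(k+1)`-coboundaries: images under `d_{λω}` of alternating `k`-cochains. -/
noncomputable def Bdef (L : Type*) [LieRing L] [LieAlgebra ℝ L]
    (lam : ℝ) (ω : L → ℝ) (k : ℕ) : Submodule ℝ (Cochain L (k + 1)) :=
  Submodule.map (dDefL L lam ω k) (AltSub L k)

/-- The deformed cohomology `H^{k+1}_{λω}(g)` = closed forms modulo exact forms. -/
noncomputable abbrev Hdef (L : Type*) [LieRing L] [LieAlgebra ℝ L]
    (lam : ℝ) (ω : L → ℝ) (k : ℕ) :=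
  Zdef L lam ω (k + 1) ⧸
    Submodule.comap (Zdef L lam ω (k + 1)).subtype (Bdef L lam ω k)

/-- The 1-cochain associated to a linear functional. -/
def c1 {L : Type*} (f : L → ℝ) : Cochain L 1 := fun X => f (X 0)

/-- The wedge product `f ∧ g` of two 1-forms, as a 2-cochain. -/
def w2 {L : Type*} (f g : L → ℝ) : Cochain L 2 :=
  fun X => f (X 0) * g (X 1) - f (X 1) * g (X 0)


lemma exists_isAlt_bilin_of_mem_altSub_two {θ : Cochain L 2} (hθ : θ ∈ AltSub L 2) :
    ∃ B : L →ₗ[ℝ] L →ₗ[ℝ] ℝ, B.IsAlt ∧ θ = fun X => B (X 0) (X 1) := by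
  obtain ⟨f, rfl⟩ := hθ
  have upd0 : ∀ x y z : L, Function.update ![x, y] 0 z = ![z, y] := fun x y z => by
    funext i; fin_cases i <;> simp
  have upd1 : ∀ x y z : L, Function.update ![x, y] 1 z = ![x, z] := fun x y z => by
    funext i; fin_cases i <;> simp
  refine ⟨LinearMap.mk₂ ℝ (fun x y => f ![x, y]) (fun x x' y => ?_) (fun c x y => ?_)
      (fun x y y' => ?_) (fun c x y => ?_), fun x => ?_, ?_⟩
  · simpa only [upd0] using f.map_update_add ![x, y] 0 x x'
  · simpa only [upd0] using f.map_update_smul ![x, y] 0 c x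
  · simpa only [upd1] using f.map_update_add ![x, y] 1 y y'
  · simpa only [upd1] using f.map_update_smul ![x, y] 1 c y
  · exact f.map_eq_zero_of_eq ![x, x] (i := 0) (j := 1) rfl (by decide)
  · funext X
    simp only [LinearMap.mk₂_apply]
    congr 1; funext i; fin_cases i <;> rfl

lemma dDefL_eq {k : ℕ} (lam : ℝ) (ω : L → ℝ) (θ : Cochain L k) :
    dDefL L lam ω k θ = CEd θ + lam • oneWedge ω θ :=
  rfl

lemma dDefL_two_apply (lam : ℝ) (ω : L → ℝ) (B : L →ₗ[ℝ] L →ₗ[ℝ] ℝ) (x y z : L) :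
    dDefL L lam ω 2 (fun X => B (X 0) (X 1)) ![x, y, z] =
      -B ⁅x, y⁆ z + B ⁅x, z⁆ y - B ⁅y, z⁆ x
        + lam * (ω x * B y z - ω y * B x z + ω z * B x y) := by
  have h0 : Fin.removeNth 0 ![x, y, z] = ![y, z] := by funext i; fin_cases i <;> rfl
  have h1 : Fin.removeNth 1 ![x, y, z] = ![x, z] := by funext i; fin_cases i <;> rfl
  have h2 : Fin.removeNth 2 ![x, y, z] = ![x, y] := by funext i; fin_cases i <;> rfl
  rw [dDefL_eq]
  simp only [Pi.add_apply, Pi.smul_apply, smul_eq_mul, CEd, oneWedge, Nat.reduceAdd,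
    Fin.sum_univ_three, h0, h1, h2]
  norm_num [Fin.removeNth, Fin.succAbove, Fin.lt_def, Matrix.cons_val_two]
  ring

lemma dDefL_c1_apply (lam : ℝ) (ω φ : L → ℝ) (x y : L) :
    dDefL L lam ω 1 (c1 φ) ![x, y] = -φ ⁅x, y⁆ + lam * (ω x * φ y - ω y * φ x) := by
  have h0 : Fin.removeNth 0 ![x, y] = ![y] := by funext i; fin_cases i; rfl
  have h1 : Fin.removeNth 1 ![x, y] = ![x] := by funext i; fin_cases i; rfl
  rw [dDefL_eq]
  simp only [Pi.add_apply, Pi.smul_apply, smul_eq_mul, CEd, oneWedge, c1, Nat.reduceAdd,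
    Fin.sum_univ_two, h0, h1]
  norm_num [sub_eq_add_neg]

lemma c1_mem_altSub (φ : L →ₗ[ℝ] ℝ) : c1 ⇑φ ∈ AltSub L 1 :=
  ⟨AlternatingMap.ofSubsingleton ℝ L ℝ 0 φ, rfl⟩

def deformedCoboundary (lam : ℝ) (ω φ : L →ₗ[ℝ] ℝ) : L →ₗ[ℝ] L →ₗ[ℝ] ℝ :=
  LinearMap.mk₂ ℝ (fun x y => -φ ⁅x, y⁆ + lam * (ω x * φ y - ω y * φ x))
    (fun x x' y => by simp only [add_lie, map_add]; ring)
    (fun c x y => by simp only [smul_lie, map_smul, smul_eq_mul]; ring)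
    (fun x y y' => by simp only [lie_add, map_add]; ring)
    (fun c x y => by simp only [lie_smul, map_smul, smul_eq_mul]; ring)

@[simp]
lemma deformedCoboundary_apply (lam : ℝ) (ω φ : L →ₗ[ℝ] ℝ) (x y : L) :
    deformedCoboundary lam ω φ x y = -φ ⁅x, y⁆ + lam * (ω x * φ y - ω y * φ x) :=
  rfl

lemma deformedCoboundary_isAlt (lam : ℝ) (ω φ : L →ₗ[ℝ] ℝ) :
    (deformedCoboundary lam ω φ).IsAlt := fun x => by
  simp only [deformedCoboundary_apply, lie_self, map_zero]; ring

lemma deformedCoboundary_apply_of_lie_eq_smul (lam : ℝ) {c : ℝ} {ω : L →ₗ[ℝ] ℝ} (φ : L →ₗ[ℝ] ℝ)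
    {x y : L} (hx : ω x = 1) (hy : ω y = 0) (h : ⁅x, y⁆ = c • y) :
    deformedCoboundary lam ω φ x y = (lam - c) * φ y := by
  rw [deformedCoboundary_apply, h, hx, hy, map_smul, smul_eq_mul]
  ring

lemma deformedCoboundary_apply_of_eq_zero (lam : ℝ) {ω : L →ₗ[ℝ] ℝ} (φ : L →ₗ[ℝ] ℝ)
    {x y : L} (hx : ω x = 0) (hy : ω y = 0) :
    deformedCoboundary lam ω φ x y = -φ ⁅x, y⁆ := by
  rw [deformedCoboundary_apply, hx, hy]
  ring

lemma dDefL_c1_eq (lam : ℝ) (ω φ : L →ₗ[ℝ] ℝ) :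
    dDefL L lam ω 1 (c1 φ) = fun X => deformedCoboundary lam ω φ (X 0) (X 1) := by
  funext X
  have hX : X = ![X 0, X 1] := by funext i; fin_cases i <;> rfl
  rw [hX, dDefL_c1_apply]
  rfl

lemma deformedCoboundary_mem_Bdef (lam : ℝ) (ω φ : L →ₗ[ℝ] ℝ) :
    (fun X => deformedCoboundary lam ω φ (X 0) (X 1)) ∈ Bdef L lam ω 1 :=
  ⟨c1 φ, c1_mem_altSub φ, dDefL_c1_eq lam ω φ⟩

lemma cocycle_identity {lam : ℝ} {ω : L → ℝ} {B : L →ₗ[ℝ] L →ₗ[ℝ] ℝ}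
    (hd : dDefL L lam ω 2 (fun X => B (X 0) (X 1)) = 0) (x y z : L) :
    -B ⁅x, y⁆ z + B ⁅x, z⁆ y - B ⁅y, z⁆ x
      + lam * (ω x * B y z - ω y * B x z + ω z * B x y) = 0 := by
  rw [← dDefL_two_apply, hd]
  rfl

lemma LinearMap.IsAlt.ext_basis {R M N ι : Type*} [CommSemiring R] [AddCommMonoid M] [Module R M]
    [AddCommGroup N] [Module R N] [LinearOrder ι] (b : Module.Basis ι R M)
    {B B' : M →ₗ[R] M →ₗ[R] N} (hB : B.IsAlt) (hB' : B'.IsAlt)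
    (h : ∀ i j, i < j → B (b i) (b j) = B' (b i) (b j)) : B = B' := by
  refine LinearMap.ext_basis b b fun i j => ?_
  rcases lt_trichotomy i j with hij | rfl | hji
  · exact h i j hij
  · rw [hB, hB']
  · rw [← hB.neg, ← hB'.neg, h j i hji]

-- `E i` is the basis vector `X_{i+1}` of the paper.
structure IsExample2Basis {H : Type*} [LieRing H] [LieAlgebra ℝ H]
    (E : Module.Basis (Fin 5) ℝ H) : Prop where
  lie01 : ⁅E 0, E 1⁆ = E 1
  lie02 : ⁅E 0, E 2⁆ = -E 2
  lie03 : ⁅E 0, E 3⁆ = (-2 : ℝ) • E 3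
  lie04 : ⁅E 0, E 4⁆ = 0
  lie12 : ⁅E 1, E 2⁆ = -E 4
  lie13 : ⁅E 1, E 3⁆ = 0
  lie14 : ⁅E 1, E 4⁆ = 0
  lie23 : ⁅E 2, E 3⁆ = 0
  lie24 : ⁅E 2, E 4⁆ = 0
  lie34 : ⁅E 3, E 4⁆ = 0

namespace IsExample2Basis

variable {H : Type*} [LieRing H] [LieAlgebra ℝ H] {E : Module.Basis (Fin 5) ℝ H}
  {lam : ℝ} {B : H →ₗ[ℝ] H →ₗ[ℝ] ℝ}

lemma cocycle_relations (hE : IsExample2Basis E) (hB : B.IsAlt)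
    (hd : dDefL H lam (E.coord 0) 2 (fun X => B (X 0) (X 1)) = 0) :
    B (E 0) (E 4) = lam * B (E 1) (E 2) ∧ (lam + 1) * B (E 1) (E 3) = 0 ∧
      (lam - 1) * B (E 1) (E 4) = 0 ∧ (lam + 3) * B (E 2) (E 3) = 0 ∧
      (lam + 1) * B (E 2) (E 4) = 0 ∧ B (E 3) (E 4) = 0 := by
  have e012 := cocycle_identity hd (E 0) (E 1) (E 2)
  have e013 := cocycle_identity hd (E 0) (E 1) (E 3)
  have e014 := cocycle_identity hd (E 0) (E 1) (E 4)
  have e023 := cocycle_identity hd (E 0) (E 2) (E 3)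
  have e024 := cocycle_identity hd (E 0) (E 2) (E 4)
  have e123 := cocycle_identity hd (E 1) (E 2) (E 3)
  simp only [hE.lie01, hE.lie02, hE.lie03, hE.lie04, hE.lie12, hE.lie13,
    hE.lie14, hE.lie23, hE.lie24, map_neg, map_smul, map_zero, LinearMap.neg_apply,
    LinearMap.smul_apply, LinearMap.zero_apply, smul_eq_mul, Module.Basis.coord_apply,
    Module.Basis.repr_self, Finsupp.single_apply, ← hB.neg (E 0) (E 4), ← hB.neg (E 1) (E 2),
    ← hB.neg (E 1) (E 3), ← hB.neg (E 2) (E 3), ← hB.neg (E 3) (E 4)]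
    at e012 e013 e014 e023 e024 e123
  norm_num [Fin.ext_iff] at e012 e013 e014 e023 e024 e123
  exact ⟨by linear_combination -e012, by linear_combination e013, by linear_combination e014,
    by linear_combination e023, by linear_combination e024, e123⟩

noncomputable def primitive (E : Module.Basis (Fin 5) ℝ H) (lam : ℝ)
    (B : H →ₗ[ℝ] H →ₗ[ℝ] ℝ) : H →ₗ[ℝ] ℝ :=
  E.constr ℝ ![0, B (E 0) (E 1) / (lam - 1), B (E 0) (E 2) / (lam + 1),
    B (E 0) (E 3) / (lam + 2), B (E 1) (E 2)]

lemma deformedCoboundary_primitive (hE : IsExample2Basis E) (hB : B.IsAlt)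
    (hd : dDefL H lam (E.coord 0) 2 (fun X => B (X 0) (X 1)) = 0)
    (h1 : lam ≠ 1) (hm1 : lam ≠ -1) (hm2 : lam ≠ -2) (hm3 : lam ≠ -3) :
    deformedCoboundary lam (E.coord 0) (primitive E lam B) = B := by
  have h1' : lam - 1 ≠ 0 := sub_ne_zero.mpr h1
  have hm1' : lam + 1 ≠ 0 := fun h => hm1 (by linarith)
  have hm2' : lam + 2 ≠ 0 := fun h => hm2 (by linarith)
  have hm3' : lam + 3 ≠ 0 := fun h => hm3 (by linarith)
  obtain ⟨r04, r13, r14, r23, r24, r34⟩ := hE.cocycle_relations hB hd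
  have ω0 : E.coord 0 (E 0) = 1 := by simp
  have ω_ne (i : Fin 5) (hi : i ≠ 0) : E.coord 0 (E i) = 0 := by simp [hi]
  have hφ (i : Fin 5) : primitive E lam B (E i) = _ := E.constr_basis ℝ _ i
  have hmul (j : Fin 5) (hj : j ≠ 0) {c : ℝ} (h : ⁅E 0, E j⁆ = c • E j) :=
    deformedCoboundary_apply_of_lie_eq_smul lam (primitive E lam B) ω0 (ω_ne j hj) h
  have hzero (i j : Fin 5) (hi : i ≠ 0) (hj : j ≠ 0) :=
    deformedCoboundary_apply_of_eq_zero lam (primitive E lam B) (ω_ne i hi) (ω_ne j hj)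
  refine (deformedCoboundary_isAlt lam _ _).ext_basis E hB fun i j hij => ?_
  fin_cases i <;> fin_cases j <;>
    simp only [Fin.zero_eta, Fin.mk_one, Fin.reduceFinMk, Fin.reduceLT] at hij ⊢
  · rw [hmul 1 (by decide) (c := 1) (by rw [one_smul, hE.lie01]), hφ]
    exact mul_div_cancel₀ _ h1'
  · rw [hmul 2 (by decide) (c := -1) (by rw [neg_one_smul, hE.lie02]), hφ, sub_neg_eq_add]
    exact mul_div_cancel₀ _ hm1'
  · rw [hmul 3 (by decide) hE.lie03, hφ, sub_neg_eq_add]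
    exact mul_div_cancel₀ _ hm2'
  · rw [hmul 4 (by decide) (c := 0) (by rw [zero_smul, hE.lie04]), hφ, sub_zero, r04]
    rfl
  · rw [hzero 1 2 (by decide) (by decide), hE.lie12, map_neg, neg_neg, hφ]
    rfl
  · rw [hzero 1 3 (by decide) (by decide), hE.lie13, map_zero, neg_zero,
      (mul_eq_zero.mp r13).resolve_left hm1']
  · rw [hzero 1 4 (by decide) (by decide), hE.lie14, map_zero, neg_zero,
      (mul_eq_zero.mp r14).resolve_left h1']
  · rw [hzero 2 3 (by decide) (by decide), hE.lie23, map_zero, neg_zero,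
      (mul_eq_zero.mp r23).resolve_left hm3']
  · rw [hzero 2 4 (by decide) (by decide), hE.lie24, map_zero, neg_zero,
      (mul_eq_zero.mp r24).resolve_left hm1']
  · rw [hzero 3 4 (by decide) (by decide), hE.lie34, map_zero, neg_zero, r34]

end IsExample2Basis

/-- for `λ ∉ {-3,-2,-1,1}` the second deformed cohomology
`H^2_{λθ^1}(h)` of the Lie algebra of Example 2 vanishes. -/
theorem H2_deformed_vanishes
    (H : Type*) [LieRing H] [LieAlgebra ℝ H] (E : Module.Basis (Fin 5) ℝ H)
    (b01 : ⁅E 0, E 1⁆ = E 1) (b02 : ⁅E 0, E 2⁆ = -E 2)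
    (b03 : ⁅E 0, E 3⁆ = (-2 : ℝ) • E 3) (b12 : ⁅E 1, E 2⁆ = -E 4)
    (b04 : ⁅E 0, E 4⁆ = 0) (b13 : ⁅E 1, E 3⁆ = 0) (b14 : ⁅E 1, E 4⁆ = 0)
    (b23 : ⁅E 2, E 3⁆ = 0) (b24 : ⁅E 2, E 4⁆ = 0) (b34 : ⁅E 3, E 4⁆ = 0)
    (lam : ℝ) (hlam : lam ∉ ({-3, -2, -1, 1} : Set ℝ)) :
    ∀ x : Hdef H lam (fun v => E.repr v 0) 1, x = 0 := by
  have hE : IsExample2Basis E := ⟨b01, b02, b03, b04, b12, b13, b14, b23, b24, b34⟩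
  simp only [Set.mem_insert_iff, Set.mem_singleton_iff, not_or] at hlam
  obtain ⟨hm3, hm2, hm1, h1⟩ := hlam
  intro x
  obtain ⟨⟨θ, hθ, hdθ⟩, rfl⟩ := Submodule.Quotient.mk_surjective _ x
  rw [Submodule.Quotient.mk_eq_zero, Submodule.mem_comap]
  obtain ⟨B, hB, rfl⟩ := exists_isAlt_bilin_of_mem_altSub_two hθ
  have hd : dDefL H lam (E.coord 0) 2 (fun X => B (X 0) (X 1)) = 0 := hdθ
  have hmem := deformedCoboundary_mem_Bdef lam (E.coord 0) (IsExample2Basis.primitive E lam B)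
  rwa [hE.deformedCoboundary_primitive hB hd h1 hm1 hm2 hm3] at hmem
end

section
/- Let h be the 5-dimensional real Lie algebra with Maurer–Cartan relations dθ^1=0, dθ^2=-θ^1∧θ^2, dθ^3=θ^1∧θ^3, dθ^4=2θ^1∧θ^4, dθ^5=θ^2∧θ^3 on the dual basis θ^1,...,θ^5. Then H^2_{-2θ^1}(h) is one-dimensional, spanned by the class of θ^1∧θ^4. -/
open scoped BigOperators

variable {L : Type*} [LieRing L] [LieAlgebra ℝ L]

/-!
Indices are shifted by one: `E i` is `X_{i+1}` and `E.coord i` is `θ^{i+1}`.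

Evaluating `d_{-2θ^1} z = 0` on triples of basis vectors leaves only the coefficients of
`θ^1∧θ^2`, `θ^1∧θ^3`, `θ^1∧θ^4` and `θ^2∧θ^3 - 2 θ^1∧θ^5` free. All of these except `θ^1∧θ^4`
are exact: they are the images of `θ^2`, `θ^3` and `θ^5` (up to scalars), because
`d_{-2θ^1} θ^i = -θ^i ∘ [·,·] - 2 θ^1 ∧ θ^i`. On the other hand every exact 2-form vanishes on
`(X_1, X_4)`, since `d_{-2θ^1} η (X_1, X_4) = -η [X_1, X_4] - 2 η X_4 = 2 η X_4 - 2 η X_4 = 0`,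
whereas `θ^1∧θ^4` does not.
-/

namespace Submodule

theorem span_singleton_mk_eq_top {R V : Type*} [Ring R] [AddCommGroup V] [Module R V]
    {Z B : Submodule R V} (v : Z) (h : ∀ z ∈ Z, ∃ c : R, z - c • (v : V) ∈ B) :
    span R {(Quotient.mk v : Z ⧸ B.comap Z.subtype)} = ⊤ := by
  refine eq_top_iff'.mpr fun q => ?_
  obtain ⟨z, rfl⟩ := Quotient.mk_surjective _ q
  obtain ⟨c, hc⟩ := h z z.2
  refine mem_span_singleton.mpr ⟨c, ?_⟩
  rw [← Quotient.mk_smul, Quotient.eq, mem_comap]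
  simpa using B.neg_mem hc

theorem finrank_quotient_comap_subtype_eq_one {K V : Type*} [DivisionRing K] [AddCommGroup V]
    [Module K V] {Z B : Submodule K V} (v : Z) (hv : (v : V) ∉ B)
    (h : ∀ z ∈ Z, ∃ c : K, z - c • (v : V) ∈ B) :
    Module.finrank K (Z ⧸ B.comap Z.subtype) = 1 := by
  have hne : (Quotient.mk v : Z ⧸ B.comap Z.subtype) ≠ 0 := by
    simpa [Quotient.mk_eq_zero] using hv
  rw [← finrank_top, ← span_singleton_mk_eq_top v h, finrank_span_singleton hne]

end Submodule

namespace AlternatingMap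

section CommSemiring

variable {R M N : Type*} [CommSemiring R] [AddCommMonoid M] [Module R M] [AddCommMonoid N]
  [Module R N]

theorem apply_fin_two_eq_sum {ι : Type*} [Fintype ι] (b : Module.Basis ι R M)
    (f : M [⋀^Fin 2]→ₗ[R] N) (v : Fin 2 → M) :
    f v = ∑ i, ∑ j, (b.repr (v 0) i * b.repr (v 1) j) • f ![b i, b j] := by
  let B : M →ₗ[R] M →ₗ[R] N := LinearMap.mk₂ R (fun x y => f ![x, y])
    (fun _ _ _ => f.map_vecCons_add _ _ _) (fun _ _ _ => f.map_vecCons_smul _ _ _)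
    (fun x _ _ => (f.curryLeft x).map_vecCons_add _ _ _)
    (fun _ x _ => (f.curryLeft x).map_vecCons_smul _ _ _)
  obtain ⟨x, y, rfl⟩ : ∃ x y, v = ![x, y] := ⟨v 0, v 1, by ext i; fin_cases i <;> rfl⟩
  change B x y = ∑ i, ∑ j, (b.repr x i * b.repr y j) • B (b i) (b j)
  conv_lhs => rw [← b.sum_repr x, ← b.sum_repr y]
  simp_rw [LinearMap.map_sum₂, map_sum, LinearMap.map_smul₂, map_smul, mul_smul]

theorem apply_pair_self (f : M [⋀^Fin 2]→ₗ[R] N) (x : M) : f ![x, x] = 0 :=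
  f.map_eq_zero_of_eq _ (i := 0) (j := 1) rfl (by decide)

theorem apply_pair_zero_left (f : M [⋀^Fin 2]→ₗ[R] N) (y : M) : f ![0, y] = 0 :=
  f.map_coord_zero 0 rfl

end CommSemiring

variable {R M N : Type*} [CommRing R] [AddCommGroup M] [Module R M] [AddCommGroup N] [Module R N]

theorem apply_pair_swap (f : M [⋀^Fin 2]→ₗ[R] N) (x y : M) : f ![y, x] = -f ![x, y] := by
  convert f.map_swap ![x, y] (i := 0) (j := 1) (by decide) using 2
  ext i; fin_cases i <;> rfl

theorem apply_pair_neg_left (f : M [⋀^Fin 2]→ₗ[R] N) (x y : M) : f ![-x, y] = -f ![x, y] := by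
  rw [← neg_one_smul R x, f.map_vecCons_smul, neg_one_smul]

end AlternatingMap

section LowDegree

variable {𝔤 M : Type*} [LieRing 𝔤]

theorem CEd_one_apply (θ : Cochain 𝔤 1) (X : Fin 2 → 𝔤) : CEd θ X = -θ ![⁅X 0, X 1⁆] := by
  simp only [CEd, Nat.reduceAdd, Fin.val_fin_lt, Fin.sum_univ_two, Fin.isValue, not_lt_zero,
    ↓reduceDIte, Fin.lt_one_iff, Fin.coe_ofNat_eq_mod, Nat.mod_succ, zero_add,
    Finset.sum_dite_eq', Finset.mem_univ, ↓reduceIte, Nat.zero_mod, pow_one, Fin.zero_eta,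
    Fin.removeNth_zero, neg_mul, one_mul, neg_inj]
  congr 1; ext i; fin_cases i; rfl

theorem CEd_two_apply (θ : Cochain 𝔤 2) (X : Fin 3 → 𝔤) :
    CEd θ X = -θ ![⁅X 0, X 1⁆, X 2] + θ ![⁅X 0, X 2⁆, X 1] - θ ![⁅X 1, X 2⁆, X 0] := by
  simp only [CEd, Nat.reduceAdd, Fin.val_fin_lt, Fin.sum_univ_three, Fin.isValue, not_lt_zero,
    ↓reduceDIte, Fin.lt_one_iff, Fin.coe_ofNat_eq_mod, Nat.one_mod, zero_add, Nat.mod_succ,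
    Nat.zero_mod, pow_one, Fin.zero_eta, Fin.removeNth_zero, neg_mul, one_mul, Fin.reduceLT,
    even_two, Even.neg_pow, one_pow, one_ne_zero, Fin.mk_one, Fin.reduceEq, lt_self_iff_false,
    add_zero, sub_eq_add_neg, Odd.neg_one_pow, Nat.odd_iff]
  congrm -θ ?_ + θ ?_ + -θ ?_ <;> ext i <;> fin_cases i <;> rfl

theorem oneWedge_one_apply (ω : M → ℝ) (θ : Cochain M 1) (X : Fin 2 → M) :
    oneWedge ω θ X = ω (X 0) * θ ![X 1] - ω (X 1) * θ ![X 0] := by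
  simp only [oneWedge, Nat.reduceAdd, Fin.sum_univ_two, Fin.isValue, Fin.coe_ofNat_eq_mod,
    Nat.zero_mod, pow_zero, one_mul, Fin.removeNth_zero, Nat.mod_succ, pow_one, neg_mul,
    sub_eq_add_neg]
  congrm _ * θ ?_ + -(_ * θ ?_) <;> ext i <;> fin_cases i <;> rfl

theorem oneWedge_two_apply (ω : M → ℝ) (θ : Cochain M 2) (X : Fin 3 → M) :
    oneWedge ω θ X = ω (X 0) * θ ![X 1, X 2] - ω (X 1) * θ ![X 0, X 2]
      + ω (X 2) * θ ![X 0, X 1] := by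
  simp only [oneWedge, Nat.reduceAdd, Fin.sum_univ_three, Fin.isValue, Fin.coe_ofNat_eq_mod,
    Nat.zero_mod, pow_zero, one_mul, Fin.removeNth_zero, Nat.one_mod, pow_one, neg_mul,
    Nat.mod_succ, even_two, Even.neg_pow, one_pow, sub_eq_add_neg]
  congrm _ * θ ?_ + -(_ * θ ?_) + _ * θ ?_ <;> ext i <;> fin_cases i <;> rfl

variable [LieAlgebra ℝ 𝔤]

theorem dDefL_one_apply (lam : ℝ) (ω : 𝔤 → ℝ) (θ : Cochain 𝔤 1) (X : Fin 2 → 𝔤) :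
    dDefL 𝔤 lam ω 1 θ X =
      -θ ![⁅X 0, X 1⁆] + lam * (ω (X 0) * θ ![X 1] - ω (X 1) * θ ![X 0]) := by
  rw [← CEd_one_apply, ← oneWedge_one_apply]; rfl

theorem dDefL_two_apply_s9 (lam : ℝ) (ω : 𝔤 → ℝ) (θ : Cochain 𝔤 2) (X : Fin 3 → 𝔤) :
    dDefL 𝔤 lam ω 2 θ X =
      (-θ ![⁅X 0, X 1⁆, X 2] + θ ![⁅X 0, X 2⁆, X 1] - θ ![⁅X 1, X 2⁆, X 0])
      + lam * (ω (X 0) * θ ![X 1, X 2] - ω (X 1) * θ ![X 0, X 2] + ω (X 2) * θ ![X 0, X 1]) := by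
  rw [← CEd_two_apply, ← oneWedge_two_apply]; rfl

theorem isAltMap_c1 (f : 𝔤 →ₗ[ℝ] ℝ) : IsAltMap (c1 f) :=
  ⟨AlternatingMap.ofSubsingleton ℝ 𝔤 ℝ 0 f, rfl⟩

theorem isAltMap_w2 (f g : 𝔤 →ₗ[ℝ] ℝ) : IsAltMap (w2 f g) :=
  ⟨{ toFun := w2 f g
     map_update_add' X i a b := by
       fin_cases i <;>
         simp only [w2, Fin.zero_eta, Fin.mk_one, Fin.isValue, Function.update_self,
           Function.update_of_ne, ne_eq, one_ne_zero, zero_ne_one, not_false_eq_true, map_add] <;>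
         ring
     map_update_smul' X i c a := by
       fin_cases i <;>
         simp only [w2, Fin.zero_eta, Fin.mk_one, Fin.isValue, Function.update_self,
           Function.update_of_ne, ne_eq, one_ne_zero, zero_ne_one, not_false_eq_true, map_smul,
           smul_eq_mul] <;>
         ring
     map_eq_zero_of_eq' X i j hX hij := by
       fin_cases i <;> fin_cases j <;> simp_all [w2] }, rfl⟩

end LowDegree

open Module

structure IsHBasis {𝔥 : Type*} [LieRing 𝔥] [LieAlgebra ℝ 𝔥] (E : Basis (Fin 5) ℝ 𝔥) : Prop where
  lie_zero_one : ⁅E 0, E 1⁆ = E 1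
  lie_zero_two : ⁅E 0, E 2⁆ = -E 2
  lie_zero_three : ⁅E 0, E 3⁆ = (-2 : ℝ) • E 3
  lie_zero_four : ⁅E 0, E 4⁆ = 0
  lie_one_two : ⁅E 1, E 2⁆ = -E 4
  lie_one_three : ⁅E 1, E 3⁆ = 0
  lie_one_four : ⁅E 1, E 4⁆ = 0
  lie_two_three : ⁅E 2, E 3⁆ = 0
  lie_two_four : ⁅E 2, E 4⁆ = 0
  lie_three_four : ⁅E 3, E 4⁆ = 0

namespace IsHBasis

variable {𝔥 : Type*} [LieRing 𝔥] [LieAlgebra ℝ 𝔥] {E : Basis (Fin 5) ℝ 𝔥}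

theorem lie_eq (hE : IsHBasis E) (x y : 𝔥) : ⁅x, y⁆ =
    (E.repr x 0 * E.repr y 1 - E.repr x 1 * E.repr y 0) • E 1
      + (E.repr x 2 * E.repr y 0 - E.repr x 0 * E.repr y 2) • E 2
      + (2 * (E.repr x 3 * E.repr y 0 - E.repr x 0 * E.repr y 3)) • E 3
      + (E.repr x 2 * E.repr y 1 - E.repr x 1 * E.repr y 2) • E 4 := by
  conv_lhs => rw [← E.sum_repr x, ← E.sum_repr y]
  simp only [Fin.sum_univ_five, add_lie, lie_add, smul_lie, lie_smul, lie_self,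
    ← lie_skew (E 1) (E 0), ← lie_skew (E 2) (E 0), ← lie_skew (E 3) (E 0),
    ← lie_skew (E 4) (E 0), ← lie_skew (E 2) (E 1), ← lie_skew (E 3) (E 1),
    ← lie_skew (E 4) (E 1), ← lie_skew (E 3) (E 2), ← lie_skew (E 4) (E 2),
    ← lie_skew (E 4) (E 3), hE.lie_zero_one, hE.lie_zero_two, hE.lie_zero_three,
    hE.lie_zero_four, hE.lie_one_two, hE.lie_one_three, hE.lie_one_four, hE.lie_two_three,
    hE.lie_two_four, hE.lie_three_four]
  module

theorem repr_lie_zero (hE : IsHBasis E) (x y : 𝔥) : E.repr ⁅x, y⁆ 0 = 0 := by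
  simp [hE.lie_eq]

theorem repr_lie_one (hE : IsHBasis E) (x y : 𝔥) :
    E.repr ⁅x, y⁆ 1 = E.repr x 0 * E.repr y 1 - E.repr x 1 * E.repr y 0 := by
  simp [hE.lie_eq]

theorem repr_lie_two (hE : IsHBasis E) (x y : 𝔥) :
    E.repr ⁅x, y⁆ 2 = E.repr x 2 * E.repr y 0 - E.repr x 0 * E.repr y 2 := by
  simp [hE.lie_eq]

theorem repr_lie_three (hE : IsHBasis E) (x y : 𝔥) :
    E.repr ⁅x, y⁆ 3 = 2 * (E.repr x 3 * E.repr y 0 - E.repr x 0 * E.repr y 3) := by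
  simp [hE.lie_eq]

theorem repr_lie_four (hE : IsHBasis E) (x y : 𝔥) :
    E.repr ⁅x, y⁆ 4 = E.repr x 2 * E.repr y 1 - E.repr x 1 * E.repr y 2 := by
  simp [hE.lie_eq]

theorem dDefL_w2_coord_zero_coord_three (hE : IsHBasis E) :
    dDefL 𝔥 (-2) (E.coord 0) 2 (w2 (E.coord 0) (E.coord 3)) = 0 := by
  funext X
  simp only [dDefL_two_apply_s9, w2, Basis.coord_apply, Matrix.cons_val_zero, Matrix.cons_val_one,
    Matrix.cons_val_fin_one, hE.repr_lie_zero, hE.repr_lie_three, Pi.zero_apply]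
  ring

theorem w2_coord_zero_coord_one_mem_Bdef (hE : IsHBasis E) :
    w2 (E.coord 0) (E.coord 1) ∈ Bdef 𝔥 (-2) (E.coord 0) 1 := by
  refine ⟨c1 ((-3 : ℝ)⁻¹ • E.coord 1 : 𝔥 →ₗ[ℝ] ℝ), isAltMap_c1 _, funext fun X => ?_⟩
  simp only [dDefL_one_apply, c1, w2, Basis.coord_apply, LinearMap.smul_apply, smul_eq_mul,
    Matrix.cons_val_fin_one, hE.repr_lie_one]
  ring

theorem w2_coord_zero_coord_two_mem_Bdef (hE : IsHBasis E) :
    w2 (E.coord 0) (E.coord 2) ∈ Bdef 𝔥 (-2) (E.coord 0) 1 := by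
  refine ⟨c1 (-E.coord 2 : 𝔥 →ₗ[ℝ] ℝ), isAltMap_c1 _, funext fun X => ?_⟩
  simp only [dDefL_one_apply, c1, w2, Basis.coord_apply, LinearMap.neg_apply,
    Matrix.cons_val_fin_one, hE.repr_lie_two]
  ring

theorem w2_coord_one_coord_two_sub_mem_Bdef (hE : IsHBasis E) :
    w2 (E.coord 1) (E.coord 2) - (2 : ℝ) • w2 (E.coord 0) (E.coord 4) ∈
      Bdef 𝔥 (-2) (E.coord 0) 1 := by
  refine ⟨c1 (E.coord 4), isAltMap_c1 _, funext fun X => ?_⟩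
  simp only [dDefL_one_apply, c1, w2, Basis.coord_apply, Matrix.cons_val_fin_one,
    hE.repr_lie_four, Pi.sub_apply, Pi.smul_apply, smul_eq_mul]
  ring

theorem dDefL_apply_zero_three (hE : IsHBasis E) {θ : Cochain 𝔥 1} (hθ : IsAltMap θ) :
    dDefL 𝔥 (-2) (E.coord 0) 1 θ ![E 0, E 3] = 0 := by
  obtain ⟨f, rfl⟩ := hθ
  rw [dDefL_one_apply]
  simp only [Matrix.cons_val_zero, Matrix.cons_val_one, hE.lie_zero_three, f.map_vecCons_smul]
  simp

theorem w2_coord_zero_coord_three_notMem_Bdef (hE : IsHBasis E) :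
    w2 (E.coord 0) (E.coord 3) ∉ Bdef 𝔥 (-2) (E.coord 0) 1 := by
  rintro ⟨θ, hθ, h⟩
  simpa [hE.dDefL_apply_zero_three hθ, w2] using congrFun h ![E 0, E 3]

theorem relations_of_dDefL_eq_zero (hE : IsHBasis E) (f : 𝔥 [⋀^Fin 2]→ₗ[ℝ] ℝ)
    (hf : dDefL 𝔥 (-2) (E.coord 0) 2 f = 0) :
    f ![E 1, E 3] = 0 ∧ f ![E 1, E 4] = 0 ∧ f ![E 2, E 3] = 0 ∧ f ![E 2, E 4] = 0 ∧
      f ![E 3, E 4] = 0 ∧ f ![E 0, E 4] = -2 * f ![E 1, E 2] := by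
  have on_basis (i j k : Fin 5) := congrFun hf ![E i, E j, E k]
  have h013 := on_basis 0 1 3
  have h014 := on_basis 0 1 4
  have h023 := on_basis 0 2 3
  have h024 := on_basis 0 2 4
  have h123 := on_basis 1 2 3
  have h012 := on_basis 0 1 2
  simp only [dDefL_two_apply_s9, Matrix.cons_val_zero, Matrix.cons_val_one, Matrix.cons_val_two,
    Matrix.head_cons, Matrix.tail_cons, Pi.zero_apply, hE.lie_zero_one, hE.lie_zero_two,
    hE.lie_zero_three, hE.lie_zero_four, hE.lie_one_two, hE.lie_one_three, hE.lie_one_four,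
    hE.lie_two_three, hE.lie_two_four, f.map_vecCons_smul, f.apply_pair_neg_left,
    f.apply_pair_zero_left, f.apply_pair_swap (E 1) (E 3), f.apply_pair_swap (E 2) (E 3),
    f.apply_pair_swap (E 3) (E 4), f.apply_pair_swap (E 1) (E 2), f.apply_pair_swap (E 0) (E 4),
    Basis.coord_apply, Basis.repr_self, Finsupp.single_apply, Fin.reduceEq, if_true, if_false,
    smul_eq_mul] at h013 h014 h023 h024 h123 h012
  refine ⟨?_, ?_, ?_, ?_, ?_, ?_⟩ <;> linarith

theorem eq_of_dDefL_eq_zero (hE : IsHBasis E) (f : 𝔥 [⋀^Fin 2]→ₗ[ℝ] ℝ)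
    (hf : dDefL 𝔥 (-2) (E.coord 0) 2 f = 0) :
    ⇑f = f ![E 0, E 1] • w2 (E.coord 0) (E.coord 1) + f ![E 0, E 2] • w2 (E.coord 0) (E.coord 2)
      + f ![E 0, E 3] • w2 (E.coord 0) (E.coord 3)
      + f ![E 1, E 2] • (w2 (E.coord 1) (E.coord 2) - (2 : ℝ) • w2 (E.coord 0) (E.coord 4)) := by
  obtain ⟨h13, h14, h23, h24, h34, h04⟩ := hE.relations_of_dDefL_eq_zero f hf
  funext X
  rw [f.apply_fin_two_eq_sum E]
  simp only [Fin.sum_univ_five, f.apply_pair_self, f.apply_pair_swap (E 0) (E 1),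
    f.apply_pair_swap (E 0) (E 2), f.apply_pair_swap (E 0) (E 3), f.apply_pair_swap (E 0) (E 4),
    f.apply_pair_swap (E 1) (E 2), f.apply_pair_swap (E 1) (E 3), f.apply_pair_swap (E 1) (E 4),
    f.apply_pair_swap (E 2) (E 3), f.apply_pair_swap (E 2) (E 4), f.apply_pair_swap (E 3) (E 4),
    h13, h14, h23, h24, h34, h04, Pi.add_apply, Pi.sub_apply, Pi.smul_apply, smul_eq_mul, w2,
    Basis.coord_apply]
  ring

theorem sub_smul_w2_mem_Bdef (hE : IsHBasis E) {z : Cochain 𝔥 2}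
    (hz : z ∈ Zdef 𝔥 (-2) (E.coord 0) 2) :
    z - z ![E 0, E 3] • w2 (E.coord 0) (E.coord 3) ∈ Bdef 𝔥 (-2) (E.coord 0) 1 := by
  obtain ⟨⟨f, rfl⟩, hf⟩ := hz
  nth_rw 1 [hE.eq_of_dDefL_eq_zero f hf]
  convert add_mem
    (add_mem (Submodule.smul_mem _ (f ![E 0, E 1]) hE.w2_coord_zero_coord_one_mem_Bdef)
      (Submodule.smul_mem _ (f ![E 0, E 2]) hE.w2_coord_zero_coord_two_mem_Bdef))
    (Submodule.smul_mem _ (f ![E 1, E 2]) hE.w2_coord_one_coord_two_sub_mem_Bdef) using 1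
  abel

end IsHBasis

/-- `H^2_{-2θ^1}(h)` is one-dimensional, spanned by the class of
`θ^1 ∧ θ^4`. -/
theorem H2_deformed_neg_two
    (H : Type*) [LieRing H] [LieAlgebra ℝ H] (E : Module.Basis (Fin 5) ℝ H)
    (b01 : ⁅E 0, E 1⁆ = E 1) (b02 : ⁅E 0, E 2⁆ = -E 2)
    (b03 : ⁅E 0, E 3⁆ = (-2 : ℝ) • E 3) (b12 : ⁅E 1, E 2⁆ = -E 4)
    (b04 : ⁅E 0, E 4⁆ = 0) (b13 : ⁅E 1, E 3⁆ = 0) (b14 : ⁅E 1, E 4⁆ = 0)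
    (b23 : ⁅E 2, E 3⁆ = 0) (b24 : ⁅E 2, E 4⁆ = 0) (b34 : ⁅E 3, E 4⁆ = 0) :
    Module.finrank ℝ (Hdef H (-2) (fun v => E.repr v 0) 1) = 1 ∧
    ∃ hm : w2 (fun v => E.repr v 0) (fun v => E.repr v 3) ∈
        Zdef H (-2) (fun v => E.repr v 0) 2,
      Submodule.span ℝ
        {(Submodule.Quotient.mk
            (⟨w2 (fun v => E.repr v 0) (fun v => E.repr v 3), hm⟩ :
              Zdef H (-2) (fun v => E.repr v 0) 2) :
          Hdef H (-2) (fun v => E.repr v 0) 1)} = ⊤ := by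
  have hE : IsHBasis E := ⟨b01, b02, b03, b04, b12, b13, b14, b23, b24, b34⟩
  have hm : w2 (E.coord 0) (E.coord 3) ∈ Zdef H (-2) (E.coord 0) 2 :=
    ⟨isAltMap_w2 _ _, hE.dDefL_w2_coord_zero_coord_three⟩
  have hcocycle : ∀ z ∈ Zdef H (-2) (E.coord 0) 2,
      ∃ c : ℝ, z - c • w2 (E.coord 0) (E.coord 3) ∈ Bdef H (-2) (E.coord 0) 1 :=
    fun _ hz => ⟨_, hE.sub_smul_w2_mem_Bdef hz⟩
  exact ⟨Submodule.finrank_quotient_comap_subtype_eq_one ⟨_, hm⟩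
      hE.w2_coord_zero_coord_three_notMem_Bdef hcocycle,
    hm, Submodule.span_singleton_mk_eq_top ⟨_, hm⟩ hcocycle⟩
end

section
/- Let u, q : ℝ³ → ℝ be smooth functions of (t,x,y) such that q_t = (1/3)q_x³ − u_x q_x − u_y and q_y = (1/2)q_x² − u_x hold identically. Then u satisfies the potential Khokhlov–Zabolotskaya equation u_yy = u_tx + u_x u_xx at every point. -/
/-- Partial derivative in the `t`-direction of a function on `ℝ³ = ℝ × ℝ × ℝ`
with coordinates `(t, x, y)`. -/
noncomputable def pt (f : ℝ × ℝ × ℝ → ℝ) : ℝ × ℝ × ℝ → ℝ :=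
  fun p => fderiv ℝ f p (1, 0, 0)

/-- Partial derivative in the `x`-direction. -/
noncomputable def px (f : ℝ × ℝ × ℝ → ℝ) : ℝ × ℝ × ℝ → ℝ :=
  fun p => fderiv ℝ f p (0, 1, 0)

/-- Partial derivative in the `y`-direction. -/
noncomputable def py (f : ℝ × ℝ × ℝ → ℝ) : ℝ × ℝ × ℝ → ℝ :=
  fun p => fderiv ℝ f p (0, 0, 1)

/-- Directional derivatives of a smooth function are smooth. -/
lemma contDiff_pderiv {f : ℝ × ℝ × ℝ → ℝ} (hf : ContDiff ℝ (⊤ : ℕ∞) f) (v : ℝ × ℝ × ℝ) :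
    ContDiff ℝ (⊤ : ℕ∞) (fun p => fderiv ℝ f p v) :=
  (hf.fderiv_right le_rfl).clm_apply contDiff_const

/-- Clairaut/Schwarz symmetry of second directional derivatives for smooth functions. -/
lemma pderiv_symm {f : ℝ × ℝ × ℝ → ℝ} (hf : ContDiff ℝ (⊤ : ℕ∞) f) (p v w : ℝ × ℝ × ℝ) :
    fderiv ℝ (fun z => fderiv ℝ f z v) p w = fderiv ℝ (fun z => fderiv ℝ f z w) p v := by
  have hd : DifferentiableAt ℝ (fderiv ℝ f) p :=
    ((hf.fderiv_right (m := (⊤ : ℕ∞)) le_rfl).differentiable (by simp)) p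
  have hsymm := second_derivative_symmetric (f := f) (f' := fderiv ℝ f)
    (f'' := fderiv ℝ (fderiv ℝ f) p)
    (fun y => (hf.differentiable (by simp) y).hasFDerivAt) hd.hasFDerivAt
  have e1 : fderiv ℝ (fun z => fderiv ℝ f z v) p =
      (fderiv ℝ (fderiv ℝ f) p).flip v := by
    rw [show (fun z => fderiv ℝ f z v) = fun z => (fderiv ℝ f z) ((fun _ => v) z) from rfl,
      fderiv_clm_apply hd (differentiableAt_const v)]
    simp
  have e2 : fderiv ℝ (fun z => fderiv ℝ f z w) p =
      (fderiv ℝ (fderiv ℝ f) p).flip w := by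
    rw [show (fun z => fderiv ℝ f z w) = fun z => (fderiv ℝ f z) ((fun _ => w) z) from rfl,
      fderiv_clm_apply hd (differentiableAt_const w)]
    simp
  rw [e1, e2]
  exact hsymm w v

lemma pd_sub {f g : ℝ × ℝ × ℝ → ℝ} {p : ℝ × ℝ × ℝ} (hf : DifferentiableAt ℝ f p)
    (hg : DifferentiableAt ℝ g p) (v : ℝ × ℝ × ℝ) :
    fderiv ℝ (fun z => f z - g z) p v = fderiv ℝ f p v - fderiv ℝ g p v := by
  rw [fderiv_fun_sub hf hg]; simp

lemma pd_mul {f g : ℝ × ℝ × ℝ → ℝ} {p : ℝ × ℝ × ℝ} (hf : DifferentiableAt ℝ f p)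
    (hg : DifferentiableAt ℝ g p) (v : ℝ × ℝ × ℝ) :
    fderiv ℝ (fun z => f z * g z) p v = fderiv ℝ f p v * g p + f p * fderiv ℝ g p v := by
  rw [fderiv_fun_mul hf hg]; simp; ring

lemma pd_const_mul {f : ℝ × ℝ × ℝ → ℝ} {p : ℝ × ℝ × ℝ} (hf : DifferentiableAt ℝ f p)
    (c : ℝ) (v : ℝ × ℝ × ℝ) :
    fderiv ℝ (fun z => c * f z) p v = c * fderiv ℝ f p v := by
  rw [fderiv_const_mul hf]; simp

/-- if smooth `u, q` satisfy the covering system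
`q_t = (1/3)q_x³ − u_x q_x − u_y`, `q_y = (1/2)q_x² − u_x` identically, then `u`
satisfies the potential Khokhlov–Zabolotskaya equation `u_yy = u_tx + u_x u_xx`
at every point. -/
theorem pKhZ_from_covering
    (u q : ℝ × ℝ × ℝ → ℝ) (hu : ContDiff ℝ (⊤ : ℕ∞) u) (hq : ContDiff ℝ (⊤ : ℕ∞) q)
    (h1 : ∀ p, pt q p = (1/3) * (px q p)^3 - px u p * px q p - py u p)
    (h2 : ∀ p, py q p = (1/2) * (px q p)^2 - px u p) :
    ∀ p, py (py u) p = pt (px u) p + px u p * px (px u) p := by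
  intro p
  set et : ℝ × ℝ × ℝ := (1, 0, 0)
  set ex : ℝ × ℝ × ℝ := (0, 1, 0)
  set ey : ℝ × ℝ × ℝ := (0, 0, 1)
  -- smoothness of first derivatives
  have hqx := contDiff_pderiv hq ex
  have hux := contDiff_pderiv hu ex
  have huy := contDiff_pderiv hu ey
  -- differentiability at any point
  have dqx : ∀ z, DifferentiableAt ℝ (px q) z := fun z => (hqx.differentiable (by simp)) z
  have dux : ∀ z, DifferentiableAt ℝ (px u) z := fun z => (hux.differentiable (by simp)) z
  have duy : ∀ z, DifferentiableAt ℝ (py u) z := fun z => (huy.differentiable (by simp)) z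
  -- key symmetry for q : ∂_y q_t = ∂_t q_y
  have keyq : fderiv ℝ (pt q) p ey = fderiv ℝ (py q) p et := by
    unfold pt py; exact pderiv_symm hq p et ey
  -- rewrite pt q and py q as expressions
  have e1 : pt q = fun z => (1/3) * (px q z * (px q z * px q z)) - px u z * px q z - py u z := by
    funext z; rw [h1 z]; ring
  have e2 : py q = fun z => (1/2) * (px q z * px q z) - px u z := by
    funext z; rw [h2 z]; ring
  -- derivative of the first covering equation in an arbitrary direction
  have compute1 : ∀ w, fderiv ℝ (pt q) p w =
      (1/3) * (fderiv ℝ (px q) p w * (px q p * px q p) +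
        px q p * (fderiv ℝ (px q) p w * px q p + px q p * fderiv ℝ (px q) p w)) -
      (fderiv ℝ (px u) p w * px q p + px u p * fderiv ℝ (px q) p w) -
      fderiv ℝ (py u) p w := by
    intro w
    rw [e1]
    rw [pd_sub (((((dqx p).fun_mul ((dqx p).fun_mul (dqx p))).const_mul _).fun_sub
      ((dux p).fun_mul (dqx p)))) (duy p)]
    rw [pd_sub (((dqx p).fun_mul ((dqx p).fun_mul (dqx p))).const_mul _) ((dux p).fun_mul (dqx p))]
    rw [pd_const_mul ((dqx p).fun_mul ((dqx p).fun_mul (dqx p)))]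
    rw [pd_mul (dqx p) ((dqx p).fun_mul (dqx p))]
    rw [pd_mul (dqx p) (dqx p)]
    rw [pd_mul (dux p) (dqx p)]
  -- derivative of the second covering equation in an arbitrary direction
  have compute2 : ∀ w, fderiv ℝ (py q) p w =
      (1/2) * (fderiv ℝ (px q) p w * px q p + px q p * fderiv ℝ (px q) p w) -
      fderiv ℝ (px u) p w := by
    intro w
    rw [e2]
    rw [pd_sub (((dqx p).fun_mul (dqx p)).const_mul _) (dux p)]
    rw [pd_const_mul ((dqx p).fun_mul (dqx p))]
    rw [pd_mul (dqx p) (dqx p)]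
  -- further mixed-derivative symmetries
  have symq_xy : fderiv ℝ (px q) p ey = fderiv ℝ (py q) p ex := by
    unfold px py; exact pderiv_symm hq p ex ey
  have symq_xt : fderiv ℝ (px q) p et = fderiv ℝ (pt q) p ex := by
    unfold px pt; exact pderiv_symm hq p ex et
  have symu_xy : fderiv ℝ (px u) p ey = fderiv ℝ (py u) p ex := by
    unfold px py; exact pderiv_symm hu p ex ey
  -- assemble
  have E := keyq
  rw [compute1 ey, compute2 et] at E
  rw [symq_xy, compute2 ex] at E
  rw [symq_xt, compute1 ex] at E
  rw [symu_xy] at E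
  show fderiv ℝ (py u) p ey = fderiv ℝ (px u) p et + px u p * fderiv ℝ (px u) p ex
  nlinarith [E, sq_nonneg (px q p)]
end

section
/- Let u, q : ℝ³ → ℝ be smooth functions of (t,x,y) such that q_t = u_t + e^{q_y} and q_x = −e^{u_y − q_y} hold identically. Suppose moreover e^{q_y} is nowhere zero. Then u satisfies the Boyer–Finley equation u_tx = e^{u_y} u_yy at every point. -/
section Aux

variable {f g : ℝ × ℝ × ℝ → ℝ}

/-- Directional derivative operator. -/
noncomputable def DD (v : ℝ × ℝ × ℝ) (f : ℝ × ℝ × ℝ → ℝ) : ℝ × ℝ × ℝ → ℝ :=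
  fun p => fderiv ℝ f p v

lemma DD_smooth (hf : ContDiff ℝ (⊤ : ℕ∞) f) (v : ℝ × ℝ × ℝ) : ContDiff ℝ (⊤ : ℕ∞) (DD v f) :=
  (ContinuousLinearMap.apply ℝ ℝ v).contDiff.comp (hf.fderiv_right (by simp))

lemma DD_symm (hf : ContDiff ℝ (⊤ : ℕ∞) f) (v w : ℝ × ℝ × ℝ) (p : ℝ × ℝ × ℝ) :
    DD w (DD v f) p = DD v (DD w f) p := by
  have hsymm : IsSymmSndFDerivAt ℝ f p := by
    apply hf.contDiffAt.isSymmSndFDerivAt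
    rw [minSmoothness_of_isRCLikeNormedField]; exact WithTop.coe_le_coe.mpr (le_top (a := (2 : ℕ∞)))
  have hdf : DifferentiableAt ℝ (fderiv ℝ f) p :=
    ((hf.fderiv_right (m := 1) ((by exact WithTop.coe_le_coe.mpr (le_top (a := ((1 + 1 : ℕ) : ℕ∞)))))).differentiable one_ne_zero).differentiableAt
  have key : ∀ a : ℝ × ℝ × ℝ,
      fderiv ℝ (DD a f) p = (ContinuousLinearMap.apply ℝ ℝ a).comp (fderiv ℝ (fderiv ℝ f) p) := by
    intro a
    exact fderiv_comp' p (ContinuousLinearMap.apply ℝ ℝ a).differentiableAt hdf ▸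
      (fderiv_comp p (ContinuousLinearMap.apply ℝ ℝ a).differentiableAt hdf).trans (by
        rw [(ContinuousLinearMap.apply ℝ ℝ a).fderiv])
  show fderiv ℝ (DD v f) p w = fderiv ℝ (DD w f) p v
  rw [key v, key w]
  exact hsymm w v

lemma DD_add (hf : ContDiff ℝ (⊤ : ℕ∞) f) (hg : ContDiff ℝ (⊤ : ℕ∞) g) (v : ℝ × ℝ × ℝ) (p : ℝ × ℝ × ℝ) :
    DD v (fun x => f x + g x) p = DD v f p + DD v g p := by
  show fderiv ℝ _ p v = _
  rw [fderiv_fun_add (hf.differentiable (by simp)).differentiableAt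
    (hg.differentiable (by simp)).differentiableAt]
  rfl

lemma DD_exp (hg : ContDiff ℝ (⊤ : ℕ∞) g) (v : ℝ × ℝ × ℝ) (p : ℝ × ℝ × ℝ) :
    DD v (fun x => Real.exp (g x)) p = Real.exp (g p) * DD v g p := by
  show fderiv ℝ _ p v = _
  rw [((hg.differentiable (by simp)).differentiableAt.hasFDerivAt.exp).fderiv]
  rfl

lemma DD_neg (v : ℝ × ℝ × ℝ) (p : ℝ × ℝ × ℝ) :
    DD v (fun x => -f x) p = -DD v f p := by
  show fderiv ℝ _ p v = _
  rw [fderiv_fun_neg]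
  rfl

lemma DD_sub (hf : ContDiff ℝ (⊤ : ℕ∞) f) (hg : ContDiff ℝ (⊤ : ℕ∞) g) (v : ℝ × ℝ × ℝ) (p : ℝ × ℝ × ℝ) :
    DD v (fun x => f x - g x) p = DD v f p - DD v g p := by
  show fderiv ℝ _ p v = _
  rw [fderiv_fun_sub (hf.differentiable (by simp)).differentiableAt
    (hg.differentiable (by simp)).differentiableAt]
  rfl

end Aux

/-- if smooth `u, q` satisfy the covering system `q_t = u_t + e^{q_y}`,
`q_x = −e^{u_y − q_y}` identically (with `e^{q_y}` nowhere zero, which is automatic),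
then `u` satisfies the Boyer–Finley equation `u_tx = e^{u_y} u_yy` at every point. -/
theorem BF_from_covering
    (u q : ℝ × ℝ × ℝ → ℝ) (hu : ContDiff ℝ (⊤ : ℕ∞) u) (hq : ContDiff ℝ (⊤ : ℕ∞) q)
    (h1 : ∀ p, pt q p = pt u p + Real.exp (py q p))
    (h2 : ∀ p, px q p = -Real.exp (py u p - py q p))
    (hne : ∀ p, Real.exp (py q p) ≠ 0) :
    ∀ p, pt (px u) p = Real.exp (py u p) * py (py u) p := by
  intro p
  set et : ℝ × ℝ × ℝ := (1, 0, 0)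
  set ex : ℝ × ℝ × ℝ := (0, 1, 0)
  set ey : ℝ × ℝ × ℝ := (0, 0, 1)
  have hptu : ContDiff ℝ (⊤ : ℕ∞) (DD et u) := DD_smooth hu et
  have hpyu : ContDiff ℝ (⊤ : ℕ∞) (DD ey u) := DD_smooth hu ey
  have hpyq : ContDiff ℝ (⊤ : ℕ∞) (DD ey q) := DD_smooth hq ey
  have hexpq : ContDiff ℝ (⊤ : ℕ∞) (fun x => Real.exp (DD ey q x)) := Real.contDiff_exp.comp hpyq
  have hsub : ContDiff ℝ (⊤ : ℕ∞) (fun x => DD ey u x - DD ey q x) := hpyu.sub hpyq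
  have hq1 : DD et q = fun x => DD et u x + Real.exp (DD ey q x) := funext h1
  have hq2 : DD ex q = fun x => -Real.exp (DD ey u x - DD ey q x) := funext h2
  -- abbreviations
  set A := Real.exp (DD ey q p) with hA
  set B := Real.exp (DD ey u p - DD ey q p) with hB
  -- E1 : mixed t-x derivative of q, computed both ways
  have e1 : DD ex (DD et u) p + A * DD ex (DD ey q) p
      = -(B * (DD et (DD ey u) p - DD et (DD ey q) p)) := by
    have l : DD ex (DD et q) p = DD ex (DD et u) p + A * DD ex (DD ey q) p := by
      rw [hq1, DD_add hptu hexpq, DD_exp hpyq]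
    have r : DD et (DD ex q) p = -(B * (DD et (DD ey u) p - DD et (DD ey q) p)) := by
      rw [hq2]
      have : DD et (fun x => -Real.exp (DD ey u x - DD ey q x)) p
          = -DD et (fun x => Real.exp (DD ey u x - DD ey q x)) p := DD_neg et p
      rw [this, DD_exp hsub, DD_sub hpyu hpyq]
    rw [← l, ← r, DD_symm hq et ex]
  -- E2 : mixed x-y derivative of q
  have e2 : DD ex (DD ey q) p = -(B * (DD ey (DD ey u) p - DD ey (DD ey q) p)) := by
    rw [DD_symm hq ey ex]
    show DD ey (DD ex q) p = _
    rw [hq2]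
    have : DD ey (fun x => -Real.exp (DD ey u x - DD ey q x)) p
        = -DD ey (fun x => Real.exp (DD ey u x - DD ey q x)) p := DD_neg ey p
    rw [this, DD_exp hsub, DD_sub hpyu hpyq]
  -- E3 : mixed t-y derivative of q
  have e3 : DD et (DD ey q) p = DD ey (DD et u) p + A * DD ey (DD ey q) p := by
    rw [DD_symm hq ey et]
    show DD ey (DD et q) p = _
    rw [hq1, DD_add hptu hexpq, DD_exp hpyq]
  -- symmetry for u
  have e4 : DD et (DD ey u) p = DD ey (DD et u) p := DD_symm hu ey et p
  have hAB : Real.exp (DD ey u p) = A * B := by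
    rw [hA, hB, ← Real.exp_add]; ring_nf
  show DD et (DD ex u) p = Real.exp (DD ey u p) * DD ey (DD ey u) p
  rw [DD_symm hu ex et, hAB]
  linear_combination e1 - A * e2 + B * e3 - B * e4
end
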